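/- For the cancer flow, the nonzero torsion components are R^{(1)}_{(1)21} = −R^{(2)}_{(1)11} = a + (1/2)(1 − F_{PP} − F_{PQ}) and R^{(1)}_{(1)22} = −R^{(2)}_{(1)12} = (1/2)(a − F_{PQ}), where F_{PP} = −2hkPQ(3−kP²)/(1+kP²)³ and F_{PQ} = h(1−kP²)/(1+kP²)²; that is, ∂N₁₂/∂P = a + (1/2)(1 − F_{PP} − F_{PQ}) and ∂N₁₂/∂Q = (1/2)(a − F_{PQ}). -/

import Mathlib

/-! With `g(P) = P/(1+kP²)` one has `F_PQ = h g'(P)` and `F_PP = hQ g''(P)`, and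
`N₁₂ = ½((2a+1)P + aQ − hQ g'(P) − h g(P))`; both identities follow by differentiating this
form term by term. -/

lemma hasDerivAt_one_add_mul_sq (k x : ℝ) :
    HasDerivAt (fun p : ℝ => 1 + k * p ^ 2) (2 * k * x) x :=
  (((hasDerivAt_pow 2 x).const_mul k).const_add 1).congr_deriv (by norm_num; ring)

lemma hasDerivAt_div_one_add_mul_sq {k x : ℝ} (hx : 1 + k * x ^ 2 ≠ 0) :
    HasDerivAt (fun p : ℝ => p / (1 + k * p ^ 2))
      ((1 - k * x ^ 2) / (1 + k * x ^ 2) ^ 2) x :=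
  ((hasDerivAt_id' x).div (hasDerivAt_one_add_mul_sq k x) hx).congr_deriv (by ring)

lemma hasDerivAt_one_sub_mul_sq_div_one_add_mul_sq_sq {k x : ℝ} (hx : 1 + k * x ^ 2 ≠ 0) :
    HasDerivAt (fun p : ℝ => (1 - k * p ^ 2) / (1 + k * p ^ 2) ^ 2)
      (-(2 * k * x * (3 - k * x ^ 2)) / (1 + k * x ^ 2) ^ 3) x := by
  have hnum : HasDerivAt (fun p : ℝ => 1 - k * p ^ 2) (-(2 * k * x)) x :=
    (((hasDerivAt_pow 2 x).const_mul k).const_sub 1).congr_deriv (by norm_num; ring)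
  refine (hnum.div ((hasDerivAt_one_add_mul_sq k x).fun_pow 2) (pow_ne_zero 2 hx)).congr_deriv ?_
  field_simp
  ring

/-- The nonzero torsion components of the cancer flow:
`∂N₁₂/∂P = a + (1/2)(1 − F_PP − F_PQ)` and `∂N₁₂/∂Q = (1/2)(a − F_PQ)`, where
`F_PP = −2hkPQ(3−kP²)/(1+kP²)³` and `F_PQ = h(1−kP²)/(1+kP²)²`. -/
theorem cancer_flow_torsion (a h k : ℝ) (N12 : ℝ → ℝ → ℝ)
    (hN12 : ∀ P Q, N12 P Q = (1/2) * ((2*a+1) * P + a * Q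
      - h * Q * (1 - k * P ^ 2) / (1 + k * P ^ 2) ^ 2
      - h * P / (1 + k * P ^ 2)))
    (P Q : ℝ) (hden : 1 + k * P ^ 2 ≠ 0) :
    deriv (fun p => N12 p Q) P
      = a + (1/2) * (1 - (-(2 * h * k * P * Q * (3 - k * P ^ 2)) / (1 + k * P ^ 2) ^ 3)
          - h * (1 - k * P ^ 2) / (1 + k * P ^ 2) ^ 2) ∧
    deriv (fun q => N12 P q) Q
      = (1/2) * (a - h * (1 - k * P ^ 2) / (1 + k * P ^ 2) ^ 2) := by
  constructor
  · have hform : (fun p => N12 p Q) = fun p => (1/2) * ((2*a+1) * p + a * Q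
        - h * Q * ((1 - k * p ^ 2) / (1 + k * p ^ 2) ^ 2) - h * (p / (1 + k * p ^ 2))) := by
      funext p; rw [hN12]; ring
    have hderiv := (((((hasDerivAt_id' P).const_mul (2*a+1)).add_const (a * Q)).fun_sub
      ((hasDerivAt_one_sub_mul_sq_div_one_add_mul_sq_sq hden).const_mul (h * Q))).fun_sub
      ((hasDerivAt_div_one_add_mul_sq hden).const_mul h)).const_mul (1/2 : ℝ)
    rw [hform, hderiv.deriv]
    ring
  · have hform : (fun q => N12 P q) =
        fun q => (1/2) * (a - h * (1 - k * P ^ 2) / (1 + k * P ^ 2) ^ 2) * q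
          + (1/2) * ((2*a+1) * P - h * P / (1 + k * P ^ 2)) := by
      funext q; rw [hN12]; ring
    rw [hform, (((hasDerivAt_id' Q).const_mul _).add_const _).deriv, mul_one]
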